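/- arXiv:0903.3243 — 3 statements merged into one kernel-verified Lean document; each statement's English description precedes it below -/
import Mathlib

section
/- The equation G(y) - y G'(y) - y = 0 with G(y) = (1-μy)^{2/3} has a real positive root y with 1 - μy > 0 if and only if 0 < μ ≤ μ* where μ* = (3/2)(104 - 60√3)^{1/3}. -/
/-!
Put `t = (1 - μ y)^{1/3} > 0`. Then `G = t²`, `G' = -(2/3) μ / t`, and since `μ y = 1 - t³`
the equation becomes `3 t y = 2 + t³`. Eliminating `y` gives `μ = 3 t (1 - t³) / (2 + t³)`,
so roots exist exactly for the `μ` in the range of this function on `(0, 1)`. That range is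
`(0, μ*]`: the bound `μ³ ≤ μ*³` is a sum-of-squares identity in `s = t³`, the maximum is
attained at `t³ = 3√3 - 5`, and the intermediate value theorem fills in the rest.
-/

open Real Set

/-- `μ` as a function of `t = (1 - μ y)^{1/3}` along the roots `y` of `G - y G' - y = 0`. -/
noncomputable def horizonMu (t : ℝ) : ℝ := 3 * t * (1 - t ^ 3) / (2 + t ^ 3)

noncomputable def muStar : ℝ := 3 / 2 * (104 - 60 * √3) ^ ((1 : ℝ) / 3)

lemma pow_three_rpow {t : ℝ} (ht : 0 ≤ t) (r : ℝ) : (t ^ 3) ^ r = t ^ (3 * r) := by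
  exact_mod_cast (rpow_natCast_mul ht 3 r).symm

lemma rpow_one_third_pow_three {x : ℝ} (hx : 0 ≤ x) : (x ^ ((1 : ℝ) / 3)) ^ 3 = x := by
  rw [← rpow_natCast, ← rpow_mul hx]; norm_num

lemma hasDerivAt_one_sub_mul_rpow_two_thirds {μ y t : ℝ} (ht : 0 < t)
    (hty : 1 - μ * y = t ^ 3) :
    HasDerivAt (fun x => (1 - μ * x) ^ ((2 : ℝ) / 3)) (-(2 / 3) * μ / t) y := by
  have hlin : HasDerivAt (fun x => 1 - μ * x) (-μ) y := by
    simpa using ((hasDerivAt_id y).const_mul μ).const_sub 1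
  convert hlin.rpow_const (p := 2 / 3) (Or.inl (by rw [hty]; positivity)) using 1
  rw [hty, pow_three_rpow ht.le]
  norm_num [rpow_neg_one]
  ring

/-- In terms of `t = (1 - μ y)^{1/3}`, `G - y G' - y = (2 + t³ - 3 t y) / (3 t)`. -/
lemma sub_mul_deriv_sub_eq_zero_iff {μ y t : ℝ} {G : ℝ → ℝ}
    (hG : ∀ y, G y = (1 - μ * y) ^ ((2 : ℝ) / 3)) (ht : 0 < t) (hty : 1 - μ * y = t ^ 3) :
    G y - y * deriv G y - y = 0 ↔ 3 * t * y = 2 + t ^ 3 := by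
  have hderiv : HasDerivAt G (-(2 / 3) * μ / t) y := by
    rw [funext hG]; exact hasDerivAt_one_sub_mul_rpow_two_thirds ht hty
  rw [hG y, hderiv.deriv, hty, pow_three_rpow ht.le]
  have hform : (t ^ (3 * (2 / 3) : ℝ) - y * (-(2 / 3) * μ / t) - y) * (3 * t)
      = 2 + t ^ 3 - 3 * t * y := by
    norm_num
    field_simp
    linear_combination (-2) * hty
  rw [← mul_left_inj' (by positivity : 3 * t ≠ 0), hform, zero_mul, sub_eq_zero, eq_comm]

lemma exists_root_iff_exists_horizonMu_eq {μ : ℝ} (hμ : 0 < μ) {G : ℝ → ℝ}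
    (hG : ∀ y, G y = (1 - μ * y) ^ ((2 : ℝ) / 3)) :
    (∃ y : ℝ, 0 < y ∧ 1 - μ * y > 0 ∧ G y - y * deriv G y - y = 0) ↔
      ∃ t ∈ Ioo 0 1, horizonMu t = μ := by
  constructor
  · rintro ⟨y, hy, hu, hroot⟩
    set t := (1 - μ * y) ^ ((1 : ℝ) / 3)
    have ht : 0 < t := rpow_pos_of_pos hu _
    have hty : 1 - μ * y = t ^ 3 := (rpow_one_third_pow_three hu.le).symm
    have hroot' := (sub_mul_deriv_sub_eq_zero_iff hG ht hty).mp hroot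
    refine ⟨t, ⟨ht, ?_⟩, ?_⟩
    · exact (pow_lt_one_iff_of_nonneg ht.le three_ne_zero).mp (by nlinarith [mul_pos hμ hy])
    · unfold horizonMu
      rw [div_eq_iff (by positivity)]
      linear_combination (3 * t) * hty + μ * hroot'
  · rintro ⟨t, ⟨ht, -⟩, rfl⟩
    have hty : 1 - horizonMu t * ((2 + t ^ 3) / (3 * t)) = t ^ 3 := by
      unfold horizonMu; field_simp; ring
    refine ⟨(2 + t ^ 3) / (3 * t), by positivity, by rw [hty]; positivity, ?_⟩
    rw [sub_mul_deriv_sub_eq_zero_iff hG ht hty]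
    field_simp

/-- With `s = t³` this is `horizonMu t ^ 3 ≤ muStar ^ 3`; equality holds only at
`s = 3√3 - 5`. -/
lemma eight_mul_mul_one_sub_pow_three_le (s : ℝ) :
    8 * s * (1 - s) ^ 3 ≤ (104 - 60 * √3) * (2 + s) ^ 3 := by
  have h3 : √3 ^ 2 = 3 := sq_sqrt (by norm_num)
  have hsos : (104 - 60 * √3) * (2 + s) ^ 3 - 8 * s * (1 - s) ^ 3
      = 8 * (s - (3 * √3 - 5)) ^ 2 * ((s - 3 * √3 / 4) ^ 2 + 5 / 16) := by
    linear_combination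
      (-81 / 2 * √3 ^ 2 + 135 * s * √3 + 135 * √3 - 297 / 2 * s ^ 2 - 405 * s - 513 / 2) * h3
  have hnonneg : 0 ≤ 8 * (s - (3 * √3 - 5)) ^ 2 * ((s - 3 * √3 / 4) ^ 2 + 5 / 16) := by
    positivity
  linarith

lemma muStar_radicand_pos : 0 < 104 - 60 * √3 := by
  nlinarith [sq_sqrt (show (0 : ℝ) ≤ 3 by norm_num), sqrt_nonneg 3]

lemma muStar_nonneg : 0 ≤ muStar := by
  have := muStar_radicand_pos
  unfold muStar; positivity

lemma muStar_pow_three : muStar ^ 3 = 27 / 8 * (104 - 60 * √3) := by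
  rw [muStar, mul_pow, rpow_one_third_pow_three muStar_radicand_pos.le]
  norm_num

lemma horizonMu_le_muStar {t : ℝ} (ht : 0 ≤ t) : horizonMu t ≤ muStar := by
  refine le_of_pow_le_pow_left₀ three_ne_zero muStar_nonneg ?_
  rw [muStar_pow_three, horizonMu, div_pow, div_le_iff₀ (by positivity)]
  nlinarith [eight_mul_mul_one_sub_pow_three_le (t ^ 3)]

lemma horizonMu_cbrt_eq_muStar : horizonMu ((3 * √3 - 5) ^ ((1 : ℝ) / 3)) = muStar := by
  have h3 : √3 ^ 2 = 3 := sq_sqrt (by norm_num)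
  have hs0 : 0 ≤ 3 * √3 - 5 := by nlinarith [sqrt_nonneg 3]
  set t0 := (3 * √3 - 5) ^ ((1 : ℝ) / 3)
  have ht0 : t0 ^ 3 = 3 * √3 - 5 := rpow_one_third_pow_three hs0
  have hc : 104 - 60 * √3 = (√3 - 1) ^ 3 * (3 * √3 - 5) := by
    linear_combination (-(3 * √3 ^ 2 - 14 * √3 + 33)) * h3
  have hcbrt : (104 - 60 * √3) ^ ((1 : ℝ) / 3) = (√3 - 1) * t0 := by
    have hr : 0 ≤ √3 - 1 := by nlinarith [sqrt_nonneg 3]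
    rw [hc, mul_rpow (by positivity) hs0, pow_three_rpow hr,
      show (3 : ℝ) * (1 / 3) = 1 by norm_num, rpow_one]
  rw [horizonMu, muStar, hcbrt, ht0, div_eq_iff (by nlinarith [sqrt_nonneg 3])]
  linear_combination (-9 / 2 * t0) * h3

lemma exists_horizonMu_eq_iff {μ : ℝ} (hμ : 0 < μ) :
    (∃ t ∈ Ioo 0 1, horizonMu t = μ) ↔ μ ≤ muStar := by
  refine ⟨fun ⟨t, ht, hμt⟩ => hμt ▸ horizonMu_le_muStar ht.1.le, fun hle => ?_⟩
  have h3 : √3 ^ 2 = 3 := sq_sqrt (by norm_num)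
  have hs0 : 0 < 3 * √3 - 5 := by nlinarith [sqrt_nonneg 3]
  have ht0 : 0 < (3 * √3 - 5) ^ ((1 : ℝ) / 3) := rpow_pos_of_pos hs0 _
  have ht01 : (3 * √3 - 5) ^ ((1 : ℝ) / 3) < 1 :=
    rpow_lt_one hs0.le (by nlinarith [sqrt_nonneg 3]) (by norm_num)
  have hcont : ContinuousOn horizonMu (Icc 0 ((3 * √3 - 5) ^ ((1 : ℝ) / 3))) :=
    ContinuousOn.div (by fun_prop) (by fun_prop) fun x hx => by have := hx.1; positivity
  obtain ⟨t, ht, hμt⟩ := intermediate_value_Ioc ht0.le hcont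
    ⟨by simpa [horizonMu] using hμ, horizonMu_cbrt_eq_muStar ▸ hle⟩
  exact ⟨t, ⟨ht.1, ht.2.trans_lt ht01⟩, hμt⟩

/-- The equation `G - y G' - y = 0` with `G(y) = (1-μy)^{2/3}` has a real
positive root `y` with `1 - μ y > 0` if and only if
`0 < μ ≤ μ* = (3/2)(104 - 60√3)^{1/3}`. -/
theorem stmt_3 (μ : ℝ) (hμ : 0 < μ) (G : ℝ → ℝ)
    (hG : ∀ y, G y = (1 - μ * y) ^ ((2 : ℝ) / 3)) :
    (∃ y : ℝ, 0 < y ∧ 1 - μ * y > 0 ∧ G y - y * deriv G y - y = 0) ↔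
      μ ≤ (3 / 2) * (104 - 60 * Real.sqrt 3) ^ ((1 : ℝ) / 3) :=
  (exists_root_iff_exists_horizonMu_eq hμ hG).trans (exists_horizonMu_eq_iff hμ)
end

section
/- For every μ with 0 < μ < μ* (where μ* = (3/2)(104-60√3)^{1/3}), the equation G(y) - y G'(y) + y = 0 with G(y) = (1-μy)^{2/3} has exactly one real root y_p, and y_p < 0. -/
/-!
On the half-line `1 - μy > 0` the left-hand side `F(y) = G - yG' + y` has derivative
`1 + (2μ²/9) y (1 - μy)^{-4/3}`, which is positive as soon as `0 ≤ μ ≤ 9/2`; and `μ* ≤ 3/2`.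
So `F` is strictly increasing there, and since `F(0) = 1` while `F` is negative far to the left,
it has exactly one zero, which is negative.
-/

open Real Set

/-- `G y - y G'(y) + y` for `G y = (1 - μy)^{2/3}`, valid where `1 - μy > 0`. -/
noncomputable def nullConeFun (μ y : ℝ) : ℝ :=
  (1 - μ * y) ^ (2 / 3 : ℝ) + 2 * μ / 3 * y * (1 - μ * y) ^ (-1 / 3 : ℝ) + y

lemma convex_setOf_one_sub_mul_pos (μ : ℝ) : Convex ℝ {y : ℝ | 0 < 1 - μ * y} := by
  refine Set.OrdConnected.convex ⟨fun a ha b hb z hz => ?_⟩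
  simp only [mem_ofPred_eq] at *
  rcases le_total 0 μ with h | h <;> nlinarith [hz.1, hz.2]

lemma isOpen_setOf_one_sub_mul_pos (μ : ℝ) : IsOpen {y : ℝ | 0 < 1 - μ * y} :=
  isOpen_lt continuous_const (by fun_prop)

lemma hasDerivAt_one_sub_mul_rpow {μ y : ℝ} (p : ℝ) (hy : 0 < 1 - μ * y) :
    HasDerivAt (fun t => (1 - μ * t) ^ p) (-μ * p * (1 - μ * y) ^ (p - 1)) y := by
  have h : HasDerivAt (fun t => 1 - μ * t) (-μ) y := by
    simpa using ((hasDerivAt_id y).const_mul μ).const_sub 1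
  exact h.rpow_const (Or.inl hy.ne')

lemma hasDerivAt_nullConeFun {μ y : ℝ} (hy : 0 < 1 - μ * y) :
    HasDerivAt (nullConeFun μ) (1 + 2 * μ ^ 2 / 9 * y * (1 - μ * y) ^ (-4 / 3 : ℝ)) y := by
  have h := ((hasDerivAt_one_sub_mul_rpow (2 / 3) hy).add
    (((hasDerivAt_id' y).const_mul (2 * μ / 3)).mul
      (hasDerivAt_one_sub_mul_rpow (-1 / 3) hy))).add (hasDerivAt_id' y)
  refine h.congr_deriv ?_
  rw [show (2 / 3 - 1 : ℝ) = -1 / 3 by norm_num, show (-1 / 3 - 1 : ℝ) = -4 / 3 by norm_num]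
  ring

lemma nullConeFun_zero (μ : ℝ) : nullConeFun μ 0 = 1 := by
  simp [nullConeFun]

/-- For `y < 0` the derivative is `1 - (2μ/9)(x - 1) x^{-4/3}` with `x = 1 - μy > 1`, and
`(x - 1) x^{-4/3} < x^{-1/3} ≤ 1`. -/
lemma deriv_nullConeFun_pos {μ y : ℝ} (hμ0 : 0 ≤ μ) (hμ : μ ≤ 9 / 2) (hy : 0 < 1 - μ * y) :
    0 < 1 + 2 * μ ^ 2 / 9 * y * (1 - μ * y) ^ (-4 / 3 : ℝ) := by
  set x := 1 - μ * y
  have hx43 : 0 < x ^ (-4 / 3 : ℝ) := rpow_pos_of_pos hy _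
  rcases le_or_gt 0 y with hy0 | hy0
  · positivity
  have hx1 : 1 ≤ x := by nlinarith
  have hx13 : x * x ^ (-4 / 3 : ℝ) ≤ 1 := by
    rw [mul_comm, ← rpow_add_one hy.ne']
    exact rpow_le_one_of_one_le_of_nonpos hx1 (by norm_num)
  have hbound : μ * (-y) * x ^ (-4 / 3 : ℝ) < 1 := by nlinarith
  nlinarith [mul_le_mul_of_nonneg_left hbound.le (by positivity : (0 : ℝ) ≤ 2 * μ / 9)]

lemma strictMonoOn_nullConeFun {μ : ℝ} (hμ0 : 0 ≤ μ) (hμ : μ ≤ 9 / 2) :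
    StrictMonoOn (nullConeFun μ) {y : ℝ | 0 < 1 - μ * y} := by
  have hopen := isOpen_setOf_one_sub_mul_pos μ
  refine strictMonoOn_of_hasDerivWithinAt_pos (convex_setOf_one_sub_mul_pos μ)
    (fun y hy => (hasDerivAt_nullConeFun hy).continuousAt.continuousWithinAt)
    (fun y hy => (hasDerivAt_nullConeFun ?_).hasDerivWithinAt) (fun y hy => ?_)
  · rwa [hopen.interior_eq] at hy
  · rw [hopen.interior_eq] at hy
    exact deriv_nullConeFun_pos hμ0 hμ hy

/-- With `t = (1 + μ)² + 1` one has `(1 + μt)² ≤ (1 + μ)² t² = t³ - t² < t³`,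
so `(1 + μt)^{2/3} < t` and `nullConeFun μ (-t) < (1 + μt)^{2/3} - t < 0`. -/
lemma exists_neg_nullConeFun_neg {μ : ℝ} (hμ0 : 0 ≤ μ) : ∃ y < 0, nullConeFun μ y < 0 := by
  set t := (1 + μ) ^ 2 + 1
  have ht1 : 1 ≤ t := by nlinarith
  have hx : 0 < 1 + μ * t := by positivity
  have hsq : (1 + μ * t) ^ 2 < t ^ 3 := by
    have : 1 + μ * t ≤ (1 + μ) * t := by nlinarith
    nlinarith [mul_self_le_mul_self hx.le this]
  have hrpow : (1 + μ * t) ^ (2 / 3 : ℝ) < t := by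
    refine lt_of_pow_lt_pow_left₀ 3 (by positivity) ?_
    rwa [← rpow_natCast, ← rpow_mul hx.le, show (2 / 3 : ℝ) * (3 : ℕ) = (2 : ℕ) by norm_num,
      rpow_natCast]
  refine ⟨-t, by linarith, ?_⟩
  have hmid : 0 ≤ 2 * μ / 3 * t * (1 + μ * t) ^ (-1 / 3 : ℝ) := by positivity
  simp only [nullConeFun, mul_neg, sub_neg_eq_add]
  linarith

lemma exists_neg_nullConeFun_eq_zero {μ : ℝ} (hμ0 : 0 ≤ μ) : ∃ y < 0, nullConeFun μ y = 0 := by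
  obtain ⟨a, ha, hFa⟩ := exists_neg_nullConeFun_neg hμ0
  have hcont : ContinuousOn (nullConeFun μ) (Icc a 0) := fun y hy =>
    (hasDerivAt_nullConeFun (by nlinarith [hy.2])).continuousAt.continuousWithinAt
  obtain ⟨y, hy, hFy⟩ := intermediate_value_Icc ha.le hcont
    ⟨hFa.le, (nullConeFun_zero μ).ge.trans' zero_le_one⟩
  refine ⟨y, lt_of_le_of_ne hy.2 ?_, hFy⟩
  rintro rfl
  simp [nullConeFun_zero] at hFy

lemma muStar_le_three_halves : (3 / 2) * (104 - 60 * √3) ^ ((1 : ℝ) / 3) ≤ 3 / 2 := by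
  have h3 : √3 ^ 2 = 3 := sq_sqrt (by norm_num)
  have hs : 0 ≤ √3 := sqrt_nonneg 3
  have : (104 - 60 * √3) ^ ((1 : ℝ) / 3) ≤ 1 :=
    rpow_le_one (by nlinarith) (by nlinarith) (by norm_num)
  linarith

lemma sub_mul_deriv_add_eq_nullConeFun {μ y : ℝ} {G : ℝ → ℝ}
    (hG : ∀ y, G y = (1 - μ * y) ^ ((2 : ℝ) / 3)) (hy : 0 < 1 - μ * y) :
    G y - y * deriv G y + y = nullConeFun μ y := by
  rw [show G = fun t => (1 - μ * t) ^ ((2 : ℝ) / 3) from funext hG,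
    (hasDerivAt_one_sub_mul_rpow _ hy).deriv, nullConeFun,
    show (2 / 3 - 1 : ℝ) = -1 / 3 by norm_num]
  ring

/-- For `0 < μ < μ*`, the equation `G - y G' + y = 0` with
`G(y) = (1-μy)^{2/3}` has exactly one real root `y_p`, and `y_p < 0`. -/
theorem stmt_5 (μ : ℝ) (hμ0 : 0 < μ)
    (hμs : μ < (3 / 2) * (104 - 60 * Real.sqrt 3) ^ ((1 : ℝ) / 3))
    (G : ℝ → ℝ) (hG : ∀ y, G y = (1 - μ * y) ^ ((2 : ℝ) / 3)) :
    ∃ yp : ℝ, yp < 0 ∧ G yp - yp * deriv G yp + yp = 0 ∧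
      ∀ z : ℝ, 1 - μ * z > 0 → G z - z * deriv G z + z = 0 → z = yp := by
  have hμ : μ ≤ 9 / 2 := by linarith [muStar_le_three_halves]
  obtain ⟨yp, hyp, hFyp⟩ := exists_neg_nullConeFun_eq_zero hμ0.le
  have hdom : 0 < 1 - μ * yp := by nlinarith
  refine ⟨yp, hyp, by rwa [sub_mul_deriv_add_eq_nullConeFun hG hdom], fun z hz hGz => ?_⟩
  rw [sub_mul_deriv_add_eq_nullConeFun hG hz] at hGz
  exact (strictMonoOn_nullConeFun hμ0.le hμ).injOn hz hdom (hGz.trans hFyp.symm)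
end

section
/- Suppose a vector field ξ = (α(t,r), β(t,r)) on a 2-dimensional coordinate patch satisfies ∂α/∂t = 1, (R')² ∂β/∂t = ∂α/∂r, β R'' + β' R' - R' + α Ṙ' = 0, and β R' + α Ṙ - R = 0, where R = R(t,r) with R' = ∂R/∂r, Ṙ = ∂R/∂t, and R' ≠ 0. Then ∂α/∂r = 0, so α = t + c for some constant c, and ∂β/∂t = 0. -/
open ContinuousLinearMap

private lemma pd1 {E : Type*} [NormedAddCommGroup E] [NormedSpace ℝ E]
    {F : ℝ × ℝ → E} (hF : Differentiable ℝ F) (t r : ℝ) :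
    HasDerivAt (fun u => F (u, r)) (fderiv ℝ F (t, r) (1, 0)) t := by
  have h := (hF (t, r)).hasFDerivAt.comp_hasDerivAt t
    (HasDerivAt.prodMk (hasDerivAt_id t) (hasDerivAt_const t r))
  exact h

private lemma pd2 {E : Type*} [NormedAddCommGroup E] [NormedSpace ℝ E]
    {F : ℝ × ℝ → E} (hF : Differentiable ℝ F) (t r : ℝ) :
    HasDerivAt (fun v => F (t, v)) (fderiv ℝ F (t, r) (0, 1)) r := by
  have h := (hF (t, r)).hasFDerivAt.comp_hasDerivAt r
    (HasDerivAt.prodMk (hasDerivAt_const r t) (hasDerivAt_id r))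
  exact h

/-- Clairaut: the mixed partial `∂r Rt` equals `Rtr = ∂t Rr` for a smooth `F`. -/
private lemma clairaut {F : ℝ × ℝ → ℝ} (hF : ContDiff ℝ (⊤ : ℕ∞) F)
    {Rt Rr Rtr : ℝ → ℝ → ℝ}
    (hRt : ∀ t r, HasDerivAt (fun u => F (u, r)) (Rt t r) t)
    (hRr : ∀ t r, HasDerivAt (fun v => F (t, v)) (Rr t r) r)
    (hRtr : ∀ t r, HasDerivAt (fun u => Rr u r) (Rtr t r) t)
    (t r : ℝ) : HasDerivAt (fun v => Rt t v) (Rtr t r) r := by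
  have hd : Differentiable ℝ F := hF.differentiable (by simp)
  have hF' : ContDiff ℝ (⊤ : ℕ∞) (fderiv ℝ F) := hF.fderiv_right (by simp)
  have hd' : Differentiable ℝ (fderiv ℝ F) := hF'.differentiable (by simp)
  have ht : ∀ t r, Rt t r = fderiv ℝ F (t, r) (1, 0) :=
    fun t r => (hRt t r).unique (pd1 hd t r)
  have hr : ∀ t r, Rr t r = fderiv ℝ F (t, r) (0, 1) :=
    fun t r => (hRr t r).unique (pd2 hd t r)
  -- derivative in t of u ↦ fderiv F (u,r) (0,1)
  have h1 : HasDerivAt (fun u => fderiv ℝ F (u, r) ((0:ℝ), (1:ℝ)))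
      (fderiv ℝ (fderiv ℝ F) (t, r) (1, 0) (0, 1)) t := by
    have h := (ContinuousLinearMap.apply ℝ ℝ ((0:ℝ), (1:ℝ))).hasFDerivAt.comp_hasDerivAt t
      (pd1 hd' t r)
    exact h
  have h1' : HasDerivAt (fun u => Rr u r)
      (fderiv ℝ (fderiv ℝ F) (t, r) (1, 0) (0, 1)) t := by
    have : (fun u => Rr u r) = fun u => fderiv ℝ F (u, r) ((0:ℝ), (1:ℝ)) :=
      funext fun u => hr u r
    rw [this]; exact h1
  have hRtr_eq : Rtr t r = fderiv ℝ (fderiv ℝ F) (t, r) (1, 0) (0, 1) :=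
    (hRtr t r).unique h1'
  -- derivative in r of v ↦ fderiv F (t,v) (1,0)
  have h2 : HasDerivAt (fun v => fderiv ℝ F (t, v) ((1:ℝ), (0:ℝ)))
      (fderiv ℝ (fderiv ℝ F) (t, r) (0, 1) (1, 0)) r := by
    have h := (ContinuousLinearMap.apply ℝ ℝ ((1:ℝ), (0:ℝ))).hasFDerivAt.comp_hasDerivAt r
      (pd2 hd' t r)
    exact h
  have hsym : fderiv ℝ (fderiv ℝ F) (t, r) ((0:ℝ), (1:ℝ)) (1, 0)
      = fderiv ℝ (fderiv ℝ F) (t, r) (1, 0) (0, 1) :=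
    second_derivative_symmetric (fun y => (hd y).hasFDerivAt)
      (hd' (t, r)).hasFDerivAt _ _
  have h2' : HasDerivAt (fun v => Rt t v)
      (fderiv ℝ (fderiv ℝ F) (t, r) (0, 1) (1, 0)) r := by
    have : (fun v => Rt t v) = fun v => fderiv ℝ F (t, v) ((1:ℝ), (0:ℝ)) :=
      funext fun v => ht t v
    rw [this]; exact h2
  rw [hRtr_eq, ← hsym]
  exact h2'

/-- If a vector field `ξ = (α, β)` satisfies the homothetic Killing component
equations `∂α/∂t = 1`, `(R')² ∂β/∂t = ∂α/∂r`,
`β R'' + β' R' - R' + α Ṙ' = 0` and `β R' + α Ṙ - R = 0`, with `R' ≠ 0`,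
then `∂α/∂r = 0` (so `α = t + c` for some constant `c`) and `∂β/∂t = 0`. -/
theorem stmt_8 (α β R Rt Rr Rtr Rrr αr βt βr : ℝ → ℝ → ℝ)
    (hRs : ContDiff ℝ (⊤ : ℕ∞) (fun p : ℝ × ℝ => R p.1 p.2))
    (hαs : ContDiff ℝ (⊤ : ℕ∞) (fun p : ℝ × ℝ => α p.1 p.2))
    (hβs : ContDiff ℝ (⊤ : ℕ∞) (fun p : ℝ × ℝ => β p.1 p.2))
    (hαt : ∀ t r, HasDerivAt (fun u => α u r) 1 t)
    (hαr : ∀ t r, HasDerivAt (fun v => α t v) (αr t r) r)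
    (hβt : ∀ t r, HasDerivAt (fun u => β u r) (βt t r) t)
    (hβr : ∀ t r, HasDerivAt (fun v => β t v) (βr t r) r)
    (hRt : ∀ t r, HasDerivAt (fun u => R u r) (Rt t r) t)
    (hRr : ∀ t r, HasDerivAt (fun v => R t v) (Rr t r) r)
    (hRtr : ∀ t r, HasDerivAt (fun u => Rr u r) (Rtr t r) t)
    (hRrr : ∀ t r, HasDerivAt (fun v => Rr t v) (Rrr t r) r)
    (hRrne : ∀ t r, Rr t r ≠ 0)
    (heq2 : ∀ t r, (Rr t r) ^ 2 * βt t r = αr t r)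
    (heq3 : ∀ t r, β t r * Rrr t r + βr t r * Rr t r - Rr t r + α t r * Rtr t r = 0)
    (heq4 : ∀ t r, β t r * Rr t r + α t r * Rt t r - R t r = 0) :
    (∀ t r, αr t r = 0) ∧ (∃ c : ℝ, ∀ t r, α t r = t + c) ∧
    (∀ t r, βt t r = 0) := by
  -- Clairaut for R
  have hcl : ∀ t r, HasDerivAt (fun v => Rt t v) (Rtr t r) r :=
    clairaut hRs hRt hRr hRtr
  -- Differentiating eq4 in r and comparing with eq3 gives αr * Rt = 0.
  have hkey0 : ∀ t r, αr t r * Rt t r = 0 := by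
    intro t r
    have h4d : HasDerivAt (fun v => β t v * Rr t v + α t v * Rt t v - R t v)
        (βr t r * Rr t r + β t r * Rrr t r +
          (αr t r * Rt t r + α t r * Rtr t r) - Rr t r) r :=
      (((hβr t r).mul (hRrr t r)).add ((hαr t r).mul (hcl t r))).sub (hRr t r)
    have hz : (fun v => β t v * Rr t v + α t v * Rt t v - R t v) = fun _ => (0:ℝ) :=
      funext fun v => heq4 t v
    rw [hz] at h4d
    have h0 := h4d.unique (hasDerivAt_const r 0)
    have h3 := heq3 t r
    linarith
  -- αr is continuous
  have hαrc : Continuous (fun p : ℝ × ℝ => αr p.1 p.2) := by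
    have h1 : Continuous (fderiv ℝ (fun p : ℝ × ℝ => α p.1 p.2)) :=
      hαs.continuous_fderiv (by simp)
    have h2 : (fun p : ℝ × ℝ => αr p.1 p.2)
        = fun p => fderiv ℝ (fun p : ℝ × ℝ => α p.1 p.2) p ((0:ℝ), (1:ℝ)) :=
      funext fun p => (hαr p.1 p.2).unique
        (pd2 (hαs.differentiable (by simp)) p.1 p.2)
    rw [h2]
    exact (ContinuousLinearMap.apply ℝ ℝ ((0:ℝ), (1:ℝ))).continuous.comp h1
  -- Main claim: αr = 0 everywhere
  have key : ∀ t r, αr t r = 0 := by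
    intro t0 r0
    by_contra hne
    have hopen : IsOpen {p : ℝ × ℝ | αr p.1 p.2 ≠ 0} :=
      isOpen_compl_singleton.preimage hαrc
    obtain ⟨ε, hε, hball⟩ := Metric.isOpen_iff.1 hopen (t0, r0) hne
    have hmem : ∀ u v : ℝ, dist u t0 < ε → dist v r0 < ε → Rt u v = 0 := by
      intro u v hu hv
      have hmem : ((u, v) : ℝ × ℝ) ∈ Metric.ball (t0, r0) ε := by
        rw [Metric.mem_ball, Prod.dist_eq]
        exact max_lt hu hv
      have hne' : αr u v ≠ 0 := hball hmem
      have := hkey0 u v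
      exact (mul_eq_zero.1 this).resolve_left hne'
    have hdr0 : dist r0 r0 < ε := by simpa using hε
    -- R is constant in t near t0, for each v near r0
    have hconst : ∀ v, dist v r0 < ε → ∀ u, dist u t0 < ε → R u v = R t0 v := by
      intro v hv u hu
      have hder : ∀ x ∈ Metric.ball t0 ε,
          HasDerivWithinAt (fun u => R u v) ((fun _ => (0:ℝ)) x) (Metric.ball t0 ε) x := by
        intro x hx
        have h0 : Rt x v = 0 := hmem x v (Metric.mem_ball.1 hx) hv
        exact (h0 ▸ hRt x v).hasDerivWithinAt
      have hb := Convex.norm_image_sub_le_of_norm_hasDerivWithin_le (C := 0) hder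
        (fun x _ => by simp) (convex_ball t0 ε) (Metric.mem_ball_self hε)
        (Metric.mem_ball.2 hu)
      simp only [zero_mul] at hb
      have : ‖R u v - R t0 v‖ = 0 := le_antisymm hb (norm_nonneg _)
      have := norm_eq_zero.1 this
      linarith [sub_eq_zero.1 this]
    -- Rr is constant in t at r0
    have hRrconst : ∀ u, dist u t0 < ε → Rr u r0 = Rr t0 r0 := by
      intro u hu
      have hev : (fun v => R t0 v) =ᶠ[nhds r0] fun v => R u v := by
        filter_upwards [Metric.ball_mem_nhds r0 hε] with v hv
        exact (hconst v (Metric.mem_ball.1 hv) u hu).symm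
      have h1 : HasDerivAt (fun v => R t0 v) (Rr u r0) r0 :=
        (hRr u r0).congr_of_eventuallyEq hev
      exact h1.unique (hRr t0 r0)
    -- β is constant in t at r0
    have hβconst : ∀ u, dist u t0 < ε → β u r0 = β t0 r0 := by
      intro u hu
      have h4u := heq4 u r0
      have h4t := heq4 t0 r0
      have h0u : Rt u r0 = 0 := hmem u r0 hu hdr0
      have h0t : Rt t0 r0 = 0 := hmem t0 r0 (by simpa using hε) hdr0
      have hR : R u r0 = R t0 r0 := hconst r0 hdr0 u hu
      have hRr' : Rr u r0 = Rr t0 r0 := hRrconst u hu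
      rw [h0u, hR, hRr'] at h4u
      rw [h0t] at h4t
      have : β u r0 * Rr t0 r0 = β t0 r0 * Rr t0 r0 := by linarith
      exact mul_right_cancel₀ (hRrne t0 r0) this
    -- hence βt t0 r0 = 0
    have hβt0 : βt t0 r0 = 0 := by
      have hev : (fun _ : ℝ => β t0 r0) =ᶠ[nhds t0] fun u => β u r0 := by
        filter_upwards [Metric.ball_mem_nhds t0 hε] with u hu
        exact (hβconst u (Metric.mem_ball.1 hu)).symm
      have h1 : HasDerivAt (fun _ : ℝ => β t0 r0) (βt t0 r0) t0 :=
        (hβt t0 r0).congr_of_eventuallyEq hev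
      exact h1.unique (hasDerivAt_const t0 _)
    have : αr t0 r0 = 0 := by
      have := heq2 t0 r0
      rw [hβt0] at this
      linarith
    exact hne this
  refine ⟨key, ⟨α 0 0, ?_⟩, ?_⟩
  · -- α t r = t + α 0 0
    intro t r
    have h1 : ∀ r, ∀ t : ℝ, α t r - t = α 0 r - 0 := by
      intro r
      have hg : ∀ u : ℝ, HasDerivAt (fun u => α u r - u) 0 u := by
        intro u
        simpa [Pi.sub_def] using (hαt u r).sub (hasDerivAt_id' u)
      intro t
      exact is_const_of_deriv_eq_zero (fun u => (hg u).differentiableAt)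
        (fun u => (hg u).deriv) t 0
    have h2 : ∀ v : ℝ, α 0 v = α 0 0 := by
      have hg : ∀ v : ℝ, HasDerivAt (fun v => α 0 v) 0 v := by
        intro v
        have := hαr 0 v
        rwa [key 0 v] at this
      intro v
      exact is_const_of_deriv_eq_zero (fun u => (hg u).differentiableAt)
        (fun u => (hg u).deriv) v 0
    have := h1 r t
    rw [h2 r] at this
    linarith
  · intro t r
    have h := heq2 t r
    rw [key t r] at h
    have h2 : Rr t r ^ 2 ≠ 0 := pow_ne_zero 2 (hRrne t r)
    exact (mul_eq_zero.1 h).resolve_left h2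
end
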